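/- The 2n×2n complex matrix J_ℂ of a model structure, defined as the block matrix equal to diag(i,−i,…,i,−i) except that the entries (2n−1, 2k) and (2n, 2k−1) for k = 1,…,n−1 are arbitrary complex numbers L̃_{2n−1,2k} and L̃_{2n,2k−1}, satisfies J_ℂ² = −I_{2n}. -/
import Mathlib


open Complex Matrix

/-- The complexified matrix `J_ℂ` of a model structure squares to `-I`.
Indices are 0-based: diagonal entries alternate `i, -i`; the extra entries sit in the
last two rows, at positions `(2n-2, 2k-1)` and `(2n-1, 2k-2)` for `k = 1,…,n-1`
(that is, `(2n-1, 2k)` and `(2n, 2k-1)` in the 1-based indexing of the paper). -/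
theorem model_structure_matrix_squares_to_neg_id (n : ℕ) (hn : 2 ≤ n)
    (L M : Fin (2 * n) → ℂ) (J : Matrix (Fin (2 * n)) (Fin (2 * n)) ℂ)
    (hJ : ∀ i j : Fin (2 * n), J i j =
      if i = j then (if (i : ℕ) % 2 = 0 then Complex.I else -Complex.I)
      else if (i : ℕ) = 2 * n - 2 ∧ (j : ℕ) % 2 = 1 ∧ (j : ℕ) < 2 * n - 2 then L j
      else if (i : ℕ) = 2 * n - 1 ∧ (j : ℕ) % 2 = 0 ∧ (j : ℕ) < 2 * n - 2 then M j
      else 0) :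
    J * J = -1 := by
  ext i j
  rw [Matrix.mul_apply]
  -- off-diagonal entries of J sit in columns < 2n-2 and rows ≥ 2n-2, so
  -- J i k * J k j = 0 unless k = i or k = j
  have hzero : ∀ k : Fin (2 * n), k ≠ i → k ≠ j → J i k * J k j = 0 := by
    intro k hki hkj
    rcases Nat.lt_or_ge (k : ℕ) (2 * n - 2) with hk | hk
    · have : J k j = 0 := by
        rw [hJ, if_neg (fun h => hkj h), if_neg, if_neg]
        · intro ⟨h1, _⟩; omega
        · intro ⟨h1, _⟩; omega
      rw [this, mul_zero]
    · have : J i k = 0 := by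
        rw [hJ, if_neg (fun h => hki h.symm), if_neg, if_neg]
        · intro ⟨_, _, h3⟩; omega
        · intro ⟨_, _, h3⟩; omega
      rw [this, zero_mul]
  by_cases hij : i = j
  · subst hij
    have key : ∀ k : Fin (2 * n), J i k * J k i =
        if k = i then J i i * J i i else 0 := by
      intro k
      by_cases hki : k = i
      · subst hki; simp
      · rw [if_neg hki]; exact hzero k hki hki
    rw [Finset.sum_congr rfl (fun k _ => key k), Finset.sum_ite_eq' Finset.univ i]
    simp only [Finset.mem_univ, if_pos]
    rw [hJ, if_pos rfl]
    have : (-1 : Matrix (Fin (2 * n)) (Fin (2 * n)) ℂ) i i = -1 := by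
      simp [Matrix.one_apply]
    rw [this]
    split_ifs <;> simp [Complex.I_mul_I]
  · have key : ∀ k : Fin (2 * n), J i k * J k j =
        (if k = i then J i i * J i j else 0) + (if k = j then J i j * J j j else 0) := by
      intro k
      by_cases hki : k = i
      · subst hki
        rw [if_pos rfl, if_neg hij, add_zero]
      · by_cases hkj : k = j
        · subst hkj
          rw [if_neg hki, if_pos rfl, zero_add]
        · rw [if_neg hki, if_neg hkj, add_zero]
          exact hzero k hki hkj
    rw [Finset.sum_congr rfl (fun k _ => key k), Finset.sum_add_distrib,
      Finset.sum_ite_eq' Finset.univ i, Finset.sum_ite_eq' Finset.univ j]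
    simp only [Finset.mem_univ, if_pos]
    have hrhs : (-1 : Matrix (Fin (2 * n)) (Fin (2 * n)) ℂ) i j = 0 := by
      simp [Matrix.one_apply_ne hij]
    rw [hrhs, hJ i j, if_neg hij]
    split_ifs with h1 h2
    · rw [hJ i i, hJ j j, if_pos rfl, if_pos rfl,
        if_pos (show (i : ℕ) % 2 = 0 by omega),
        if_neg (show ¬ (j : ℕ) % 2 = 0 by omega)]
      ring
    · rw [hJ i i, hJ j j, if_pos rfl, if_pos rfl,
        if_neg (show ¬ (i : ℕ) % 2 = 0 by omega),
        if_pos (show (j : ℕ) % 2 = 0 by omega)]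
      ring
    · simp
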